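/- arXiv:2312.03923 — 3 statements merged into one kernel-verified Lean document; each statement's English description precedes it below -/
import Mathlib

section
/- If G is a Young function satisfying the structural condition 1 < p⁻ ≤ t·g(t)/G(t) ≤ p⁺ < ∞ for all t > 0, then for every δ > 0 there exists a constant C_δ > 0 such that G(a + b) ≤ C_δ · G(a) + (1+δ)^{p⁺} · G(b) for all a, b ≥ 0. -/
/-!
The upper structural bound `t g(t) ≤ p⁺ G(t)` says that the right derivative of `G(t) / t ^ p⁺`
is nonpositive, so `G(λ t) ≤ λ ^ p⁺ G(t)` for `λ ≥ 1`. If `a ≤ δ b` then `a + b ≤ (1 + δ) b`,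
and otherwise `a + b ≤ (1 + δ⁻¹) a`; monotonicity of `G` and the scaling bound give the estimate
with `C_δ = (1 + δ⁻¹) ^ p⁺`.
-/

open Filter Set MeasureTheory Topology

section Primitive

variable {g : ℝ → ℝ} (hg : MonotoneOn g (Ici 0))
include hg

theorem intervalIntegrable_of_monotoneOn_Ici {a b : ℝ} (ha : 0 ≤ a) (hb : 0 ≤ b) :
    IntervalIntegrable g volume a b :=
  (hg.mono fun _ hx => le_trans (le_min ha hb) hx.1).intervalIntegrable

theorem continuousOn_primitive_of_monotoneOn_Ici :
    ContinuousOn (fun x => ∫ τ in (0:ℝ)..x, g τ) (Ici 0) := by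
  intro x hx
  have hT : (0:ℝ) ≤ x + 1 := by linarith [mem_Ici.1 hx]
  have hint : IntegrableOn g (uIcc 0 (x + 1)) := by
    rw [uIcc_of_le hT]
    exact (hg.mono Icc_subset_Ici_self).integrableOn_isCompact isCompact_Icc
  have hcont := intervalIntegral.continuousOn_primitive_interval hint
  rw [uIcc_of_le hT] at hcont
  refine (hcont x ⟨hx, by linarith⟩).mono_of_mem_nhdsWithin ?_
  exact mem_nhdsWithin.2 ⟨Iio (x + 1), isOpen_Iio, by simp, fun y hy => ⟨hy.2, hy.1.le⟩⟩

theorem hasDerivWithinAt_primitive_Ici {x : ℝ} (hx : 0 ≤ x)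
    (hrc : ContinuousWithinAt g (Ici x) x) :
    HasDerivWithinAt (fun u => ∫ τ in (0:ℝ)..u, g τ) (g x) (Ici x) x := by
  have hmeas : StronglyMeasurableAtFilter g (𝓝[>] x) volume :=
    ⟨Ici 0, mem_of_superset self_mem_nhdsWithin fun _ hy => hx.trans (le_of_lt hy),
      (aemeasurable_restrict_of_monotoneOn measurableSet_Ici hg).aestronglyMeasurable⟩
  exact intervalIntegral.integral_hasDerivWithinAt_right
    (intervalIntegrable_of_monotoneOn_Ici hg le_rfl hx) hmeas (hrc.mono Ioi_subset_Ici_self)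

theorem monotoneOn_primitive_of_nonneg (hnn : ∀ x ∈ Ici (0:ℝ), 0 ≤ g x) :
    MonotoneOn (fun x => ∫ τ in (0:ℝ)..x, g τ) (Ici 0) := by
  intro s hs t ht hst
  have hsplit := intervalIntegral.integral_add_adjacent_intervals
    (intervalIntegrable_of_monotoneOn_Ici hg le_rfl hs)
    (intervalIntegrable_of_monotoneOn_Ici hg hs ht)
  have hnn' : 0 ≤ ∫ τ in s..t, g τ :=
    intervalIntegral.integral_nonneg hst fun x hx => hnn x (le_trans hs hx.1)
  simp only [← hsplit]
  linarith

end Primitive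

theorem antitoneOn_div_rpow_of_mul_deriv_le {F f : ℝ → ℝ} {p : ℝ}
    (hF : ContinuousOn F (Ioi 0)) (hF' : ∀ x > 0, HasDerivWithinAt F (f x) (Ici x) x)
    (hle : ∀ x > 0, x * f x ≤ p * F x) :
    AntitoneOn (fun x => F x / x ^ p) (Ioi 0) := by
  intro s hs t ht hst
  have hpos : ∀ x ∈ Icc s t, 0 < x := fun x hx => lt_of_lt_of_le hs hx.1
  have hderiv : ∀ x ∈ Ico s t, HasDerivWithinAt (fun x => F x / x ^ p)
      ((f x * x ^ p - F x * (p * x ^ (p - 1))) / (x ^ p) ^ 2) (Ici x) x := fun x hx =>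
    (hF' x (hpos x (Ico_subset_Icc_self hx))).div
      (Real.hasDerivAt_rpow_const (Or.inl (hpos x (Ico_subset_Icc_self hx)).ne')).hasDerivWithinAt
      (Real.rpow_pos_of_pos (hpos x (Ico_subset_Icc_self hx)) p).ne'
  have hnonpos : ∀ x ∈ Ico s t,
      (f x * x ^ p - F x * (p * x ^ (p - 1))) / (x ^ p) ^ 2 ≤ 0 := by
    intro x hx
    have hx0 := hpos x (Ico_subset_Icc_self hx)
    have hnum : f x * x ^ p - F x * (p * x ^ (p - 1)) = x ^ (p - 1) * (x * f x - p * F x) := by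
      rw [Real.rpow_sub_one hx0.ne']
      field_simp
    rw [hnum]
    exact div_nonpos_of_nonpos_of_nonneg
      (mul_nonpos_of_nonneg_of_nonpos (Real.rpow_nonneg hx0.le _) (by linarith [hle x hx0]))
      (sq_nonneg _)
  refine image_le_of_deriv_right_le_deriv_boundary (B := fun _ => F s / s ^ p) (B' := fun _ => 0)
    ?_ hderiv le_rfl continuousOn_const (fun x _ => hasDerivWithinAt_const x _ _) hnonpos
    ⟨hst, le_rfl⟩
  exact (hF.mono fun x hx => hpos x hx).div
    (fun x hx => (Real.continuousAt_rpow_const x p (Or.inl (hpos x hx).ne')).continuousWithinAt)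
    fun x hx => (Real.rpow_pos_of_pos (hpos x hx) p).ne'

theorem le_rpow_mul_of_antitoneOn_div_rpow {F : ℝ → ℝ} {p : ℝ}
    (hF : AntitoneOn (fun x => F x / x ^ p) (Ioi 0)) {t c : ℝ} (ht : 0 < t) (hc : 1 ≤ c) :
    F (c * t) ≤ c ^ p * F t := by
  have hct : 0 < c * t := by positivity
  have h : F (c * t) / (c * t) ^ p ≤ F t / t ^ p := hF ht hct (le_mul_of_one_le_left ht.le hc)
  rw [Real.mul_rpow (by linarith) ht.le, div_le_div_iff₀ (by positivity) (by positivity)] at h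
  nlinarith [Real.rpow_pos_of_pos ht p]

section Scaling

variable {G : ℝ → ℝ} {p : ℝ} (hmono : MonotoneOn G (Ici 0)) (hG0 : G 0 = 0)
  (hscale : ∀ t > 0, ∀ c ≥ 1, G (c * t) ≤ c ^ p * G t)
include hmono hG0 hscale

theorem le_one_add_rpow_mul_of_le_mul {δ a b : ℝ} (hδ : 0 ≤ δ) (ha : 0 ≤ a) (hb : 0 ≤ b)
    (hab : a ≤ δ * b) : G (a + b) ≤ (1 + δ) ^ p * G b := by
  rcases hb.eq_or_lt with rfl | hb
  · obtain rfl : a = 0 := le_antisymm (by simpa using hab) ha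
    simp [hG0]
  calc G (a + b) ≤ G ((1 + δ) * b) := hmono (by positivity : (0:ℝ) ≤ a + b)
          (by positivity : (0:ℝ) ≤ (1 + δ) * b) (by linarith)
    _ ≤ (1 + δ) ^ p * G b := hscale b hb _ (by linarith)

theorem apply_add_le_of_le_rpow_mul {δ a b : ℝ} (hδ : 0 < δ) (ha : 0 ≤ a) (hb : 0 ≤ b) :
    G (a + b) ≤ (1 + δ⁻¹) ^ p * G a + (1 + δ) ^ p * G b := by
  have hnn : ∀ t ≥ 0, 0 ≤ G t := fun t ht => hG0 ▸ hmono self_mem_Ici ht ht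
  rcases le_total a (δ * b) with hab | hab
  · have := le_one_add_rpow_mul_of_le_mul hmono hG0 hscale hδ.le ha hb hab
    have : 0 ≤ (1 + δ⁻¹) ^ p * G a := mul_nonneg (by positivity) (hnn a ha)
    linarith
  · have := le_one_add_rpow_mul_of_le_mul hmono hG0 hscale (inv_nonneg.2 hδ.le) hb ha
      (by rwa [inv_mul_eq_div, le_div_iff₀' hδ])
    have : 0 ≤ (1 + δ) ^ p * G b := mul_nonneg (by positivity) (hnn b hb)
    rw [add_comm]
    linarith

end Scaling

-- For `y = 0` the quotient is the junk value `0`, which `0 < m ≤ x / y` excludes.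
theorem le_mul_of_pos_le_div_of_div_le {x y m p : ℝ} (hy : 0 ≤ y) (hm : 0 < m)
    (hmy : m ≤ x / y) (hle : x / y ≤ p) : x ≤ p * y := by
  rcases hy.eq_or_lt with rfl | hy
  · rw [div_zero] at hmy
    linarith
  · exact (div_le_iff₀ hy).1 hle

theorem youngFunction_sum_estimate_general
    (g G : ℝ → ℝ) (pm pp : ℝ)
    (hg0 : g 0 = 0)
    (hgmono : MonotoneOn g (Set.Ici 0))
    (hgrc : ∀ t ≥ (0:ℝ), ContinuousWithinAt g (Set.Ici t) t)
    (hG : ∀ t, G t = ∫ τ in (0:ℝ)..t, g τ)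
    (hpm : 1 < pm)
    (hstruct : ∀ t > (0:ℝ), pm ≤ t * g t / G t ∧ t * g t / G t ≤ pp) :
    ∀ δ > (0:ℝ), ∃ C > (0:ℝ), ∀ a b : ℝ, 0 ≤ a → 0 ≤ b →
      G (a + b) ≤ C * G a + (1 + δ) ^ pp * G b := by
  obtain rfl : G = fun t => ∫ τ in (0:ℝ)..t, g τ := funext hG
  have hGmono := monotoneOn_primitive_of_nonneg hgmono
    fun x hx => hg0 ▸ hgmono self_mem_Ici hx hx
  have hG0 : ∫ τ in (0:ℝ)..0, g τ = 0 := intervalIntegral.integral_same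
  have hkey : ∀ t > (0:ℝ), t * g t ≤ pp * ∫ τ in (0:ℝ)..t, g τ := fun t ht =>
    le_mul_of_pos_le_div_of_div_le (hG0.symm.trans_le (hGmono self_mem_Ici ht.le ht.le))
      (by linarith) (hstruct t ht).1 (hstruct t ht).2
  have hanti := antitoneOn_div_rpow_of_mul_deriv_le
    ((continuousOn_primitive_of_monotoneOn_Ici hgmono).mono Ioi_subset_Ici_self)
    (fun x hx => hasDerivWithinAt_primitive_Ici hgmono hx.le (hgrc x hx.le)) hkey
  intro δ hδ
  exact ⟨(1 + δ⁻¹) ^ pp, by positivity, fun a b ha hb => apply_add_le_of_le_rpow_mul hGmono hG0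
    (fun t ht c hc => le_rpow_mul_of_antitoneOn_div_rpow hanti ht hc) hδ ha hb⟩

theorem youngFunction_sum_estimate
    (g G : ℝ → ℝ) (pm pp : ℝ)
    (hg0 : g 0 = 0) (hgpos : ∀ t > (0:ℝ), 0 < g t)
    (hgmono : MonotoneOn g (Set.Ici 0))
    (hgrc : ∀ t ≥ (0:ℝ), ContinuousWithinAt g (Set.Ici t) t)
    (hginf : Filter.Tendsto g Filter.atTop Filter.atTop)
    (hG : ∀ t, G t = ∫ τ in (0:ℝ)..t, g τ)
    (hpm : 1 < pm) (hpmpp : pm ≤ pp)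
    (hstruct : ∀ t > (0:ℝ), pm ≤ t * g t / G t ∧ t * g t / G t ≤ pp) :
    ∀ δ > (0:ℝ), ∃ C > (0:ℝ), ∀ a b : ℝ, 0 ≤ a → 0 ≤ b →
      G (a + b) ≤ C * G a + (1 + δ) ^ pp * G b :=
  youngFunction_sum_estimate_general g G pm pp hg0 hgmono hgrc hG hpm hstruct
end

section
/- Let m : (0,∞) → ℝ be continuous and positive with 0 < m⁻ ≤ t·m(t)/M(t) ≤ m⁺ for all t > 0, where M(t) = ∫₀ᵗ m(s)ds. Then for all a, b ≥ 0: min{a^{m⁻}, a^{m⁺}} · M(b) ≤ M(a·b) ≤ max{a^{m⁻}, a^{m⁺}} · M(b). -/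
/-!
On `(0, ∞)` the bounds `m⁻ M ≤ t M' ≤ m⁺ M` say that `log M t - m⁻ log t` is nondecreasing and
`log M t - m⁺ log t` is nonincreasing. Comparing these at `b` and `a b` gives
`a^{m⁻} M b ≤ M (a b) ≤ a^{m⁺} M b` for `a ≥ 1`, and the same with the exponents swapped for
`a ≤ 1`; the cases `a = 0` and `b = 0` hold because `M 0 = 0`.
-/

open Filter Set Real

section LogDerivativeBounds

variable {f f' : ℝ → ℝ} {p q a b : ℝ}

lemma hasDerivAt_log_sub_mul_log {t : ℝ} (ht : 0 < t) (hft : 0 < f t)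
    (hf : HasDerivAt f (f' t) t) :
    HasDerivAt (fun u => log (f u) - p * log u) ((t * f' t - p * f t) / (t * f t)) t := by
  refine ((hf.log hft.ne').sub ((hasDerivAt_log ht.ne').const_mul p)).congr_deriv ?_
  field_simp

lemma monotoneOn_log_sub_mul_log (hf : ∀ t > 0, HasDerivAt f (f' t) t)
    (hpos : ∀ t > 0, 0 < f t) (hp : ∀ t > 0, p * f t ≤ t * f' t) :
    MonotoneOn (fun t => log (f t) - p * log t) (Ioi 0) := by
  have hderiv (t : ℝ) (ht : t ∈ Ioi 0) :=
    hasDerivAt_log_sub_mul_log (p := p) ht (hpos t ht) (hf t ht)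
  refine monotoneOn_of_hasDerivWithinAt_nonneg (convex_Ioi 0)
    (fun t ht => (hderiv t ht).continuousAt.continuousWithinAt)
    (fun t ht => (hderiv t (interior_subset ht)).hasDerivWithinAt)
    fun t ht => ?_
  rw [interior_Ioi] at ht
  exact div_nonneg (sub_nonneg.2 (hp t ht)) (mul_pos ht (hpos t ht)).le

lemma antitoneOn_log_sub_mul_log (hf : ∀ t > 0, HasDerivAt f (f' t) t)
    (hpos : ∀ t > 0, 0 < f t) (hq : ∀ t > 0, t * f' t ≤ q * f t) :
    AntitoneOn (fun t => log (f t) - q * log t) (Ioi 0) := by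
  have hderiv (t : ℝ) (ht : t ∈ Ioi 0) :=
    hasDerivAt_log_sub_mul_log (p := q) ht (hpos t ht) (hf t ht)
  refine antitoneOn_of_hasDerivWithinAt_nonpos (convex_Ioi 0)
    (fun t ht => (hderiv t ht).continuousAt.continuousWithinAt)
    (fun t ht => (hderiv t (interior_subset ht)).hasDerivWithinAt)
    fun t ht => ?_
  rw [interior_Ioi] at ht
  exact div_nonpos_of_nonpos_of_nonneg (sub_nonpos.2 (hq t ht)) (mul_pos ht (hpos t ht)).le

lemma rpow_mul_le_iff_log_sub_mul_log_le (ha : 0 < a) (hb : 0 < b) (hfb : 0 < f b)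
    (hfab : 0 < f (a * b)) :
    a ^ p * f b ≤ f (a * b) ↔ log (f b) - p * log b ≤ log (f (a * b)) - p * log (a * b) := by
  rw [← log_le_log_iff (by positivity) hfab, log_mul (by positivity) hfb.ne', log_rpow ha,
    log_mul ha.ne' hb.ne']
  constructor <;> intro h <;> linarith

lemma le_rpow_mul_iff_log_sub_mul_log_le (ha : 0 < a) (hb : 0 < b) (hfb : 0 < f b)
    (hfab : 0 < f (a * b)) :
    f (a * b) ≤ a ^ p * f b ↔ log (f (a * b)) - p * log (a * b) ≤ log (f b) - p * log b := by
  rw [← log_le_log_iff hfab (by positivity), log_mul (by positivity) hfb.ne', log_rpow ha,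
    log_mul ha.ne' hb.ne']
  constructor <;> intro h <;> linarith

theorem min_rpow_mul_le_and_le_max_rpow_mul (hf : ∀ t > 0, HasDerivAt f (f' t) t)
    (hpos : ∀ t > 0, 0 < f t) (hp : ∀ t > 0, p * f t ≤ t * f' t)
    (hq : ∀ t > 0, t * f' t ≤ q * f t) (ha : 0 < a) (hb : 0 < b) :
    min (a ^ p) (a ^ q) * f b ≤ f (a * b) ∧ f (a * b) ≤ max (a ^ p) (a ^ q) * f b := by
  have hmono := monotoneOn_log_sub_mul_log hf hpos hp
  have hanti := antitoneOn_log_sub_mul_log hf hpos hq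
  have hb' : b ∈ Ioi 0 := hb
  have hab : a * b ∈ Ioi 0 := mul_pos ha hb
  have hfb := (hpos b hb).le
  have iff_le := fun r => rpow_mul_le_iff_log_sub_mul_log_le (p := r) ha hb (hpos b hb) (hpos _ hab)
  have le_iff := fun r => le_rpow_mul_iff_log_sub_mul_log_le (p := r) ha hb (hpos b hb) (hpos _ hab)
  rcases le_total 1 a with h1 | h1
  · have hle : b ≤ a * b := le_mul_of_one_le_left hb.le h1
    constructor
    · calc min (a ^ p) (a ^ q) * f b ≤ a ^ p * f b := by gcongr; exact min_le_left _ _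
        _ ≤ f (a * b) := (iff_le p).2 (hmono hb' hab hle)
    · calc f (a * b) ≤ a ^ q * f b := (le_iff q).2 (hanti hb' hab hle)
        _ ≤ max (a ^ p) (a ^ q) * f b := by gcongr; exact le_max_right _ _
  · have hle : a * b ≤ b := mul_le_of_le_one_left hb.le h1
    constructor
    · calc min (a ^ p) (a ^ q) * f b ≤ a ^ q * f b := by gcongr; exact min_le_right _ _
        _ ≤ f (a * b) := (iff_le q).2 (hanti hab hb' hle)
    · calc f (a * b) ≤ a ^ p * f b := (le_iff p).2 (hmono hab hb' hle)
        _ ≤ max (a ^ p) (a ^ q) * f b := by gcongr; exact le_max_left _ _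

end LogDerivativeBounds

theorem M_min_max_bounds_general
    (m M : ℝ → ℝ) (mm mp : ℝ)
    (hmcont : ContinuousOn m (Set.Ioi 0))
    (hmpos : ∀ t > (0:ℝ), 0 < m t)
    (hM : ∀ t, M t = ∫ τ in (0:ℝ)..t, m τ)
    (hmm : 0 < mm)
    (hstruct : ∀ t > (0:ℝ), mm ≤ t * m t / M t ∧ t * m t / M t ≤ mp) :
    ∀ a b : ℝ, 0 ≤ a → 0 ≤ b →
      min (a ^ mm) (a ^ mp) * M b ≤ M (a * b) ∧
      M (a * b) ≤ max (a ^ mm) (a ^ mp) * M b := by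
  have hMpos : ∀ t > 0, 0 < M t := fun t ht =>
    (div_pos_iff_of_pos_left (mul_pos ht (hmpos t ht))).1 (hmm.trans_le (hstruct t ht).1)
  have hderiv : ∀ t > 0, HasDerivAt M (m t) t := fun t ht => by
    -- `M t ≠ 0` rules out the junk value `0` of a non-integrable integral.
    have hint : IntervalIntegrable m MeasureTheory.volume 0 t :=
      intervalIntegral.intervalIntegrable_of_integral_ne_zero ((hM t).symm.trans_ne (hMpos t ht).ne')
    rw [funext hM]
    exact intervalIntegral.integral_hasDerivAt_right hint
      (hmcont.stronglyMeasurableAtFilter isOpen_Ioi _ ht) (hmcont.continuousAt (Ioi_mem_nhds ht))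
  have hM0 : M 0 = 0 := by simp [hM]
  intro a b ha hb
  rcases hb.eq_or_lt with rfl | hb
  · simp [hM0]
  rcases ha.eq_or_lt with rfl | ha
  · rw [zero_mul, hM0, zero_rpow hmm.ne']
    exact ⟨mul_nonpos_of_nonpos_of_nonneg (min_le_left _ _) (hMpos b hb).le,
      mul_nonneg (le_max_left _ _) (hMpos b hb).le⟩
  refine min_rpow_mul_le_and_le_max_rpow_mul hderiv hMpos (fun t ht => ?_) (fun t ht => ?_)
    ha hb
  · exact (le_div_iff₀ (hMpos t ht)).1 (hstruct t ht).1
  · exact (div_le_iff₀ (hMpos t ht)).1 (hstruct t ht).2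

theorem M_min_max_bounds
    (m M : ℝ → ℝ) (mm mp : ℝ)
    (hmcont : ContinuousOn m (Set.Ioi 0))
    (hmpos : ∀ t > (0:ℝ), 0 < m t)
    (hM : ∀ t, M t = ∫ τ in (0:ℝ)..t, m τ)
    (hmm : 0 < mm) (hmmp : mm ≤ mp)
    (hstruct : ∀ t > (0:ℝ), mm ≤ t * m t / M t ∧ t * m t / M t ≤ mp) :
    ∀ a b : ℝ, 0 ≤ a → 0 ≤ b →
      min (a ^ mm) (a ^ mp) * M b ≤ M (a * b) ∧
      M (a * b) ≤ max (a ^ mm) (a ^ mp) * M b :=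
  M_min_max_bounds_general m M mm mp hmcont hmpos hM hmm hstruct
end

section
/- Let f : ℝ → ℝ be continuous with lim_{t→0} f(t)/g(t) = 0 and limsup_{t→∞} |f(t)|/m(|t|) < ∞, where g, m are as in the structural assumptions. Then for every ε > 0 there exists C_ε > 0 such that 0 ≤ F(t) ≤ (ε p⁺/θ)·G(|t|) + C_ε·M(|t|) for all t ∈ ℝ, where F(t) = ∫₀ᵗ f(τ)dτ, G' = g, M' = m, and θ > p⁺ is the Ambrosetti-Rabinowitz exponent with 0 < θF(t) ≤ tf(t) for t ≠ 0. -/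
open Filter Set

theorem subcritical_growth_estimate
    (g G : ℝ → ℝ) (pm pp : ℝ)
    (hg0 : g 0 = 0) (hgpos : ∀ t > (0:ℝ), 0 < g t)
    (hgmono : MonotoneOn g (Set.Ici 0))
    (hgrc : ∀ t ≥ (0:ℝ), ContinuousWithinAt g (Set.Ici t) t)
    (hginf : Filter.Tendsto g Filter.atTop Filter.atTop)
    (hG : ∀ t, G t = ∫ τ in (0:ℝ)..t, g τ)
    (hpm : 1 < pm) (hpmpp : pm ≤ pp)
    (hstruct : ∀ t > (0:ℝ), pm ≤ t * g t / G t ∧ t * g t / G t ≤ pp)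
    (m M : ℝ → ℝ) (mm mp : ℝ)
    (hmcont : ContinuousOn m (Set.Ioi 0))
    (hmpos : ∀ t > (0:ℝ), 0 < m t)
    (hM : ∀ t, M t = ∫ τ in (0:ℝ)..t, m τ)
    (hmm : 0 < mm) (hmmp : mm ≤ mp)
    (hmstruct : ∀ t > (0:ℝ), mm ≤ t * m t / M t ∧ t * m t / M t ≤ mp)
    (f F : ℝ → ℝ) (θ : ℝ)
    (hf : Continuous f)
    (hF : ∀ t, F t = ∫ τ in (0:ℝ)..t, f τ)
    (hf0 : Filter.Tendsto (fun t => f t / g |t|)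
      (nhdsWithin 0 {(0:ℝ)}ᶜ) (nhds 0))
    (hfinfty : ∃ C > (0:ℝ), ∃ T > (0:ℝ), ∀ t : ℝ, T ≤ |t| → |f t| ≤ C * m |t|)
    (hθ : pp < θ)
    (hAR : ∀ t : ℝ, t ≠ 0 → 0 < θ * F t ∧ θ * F t ≤ t * f t) :
    ∀ ε > (0:ℝ), ∃ C > (0:ℝ), ∀ t : ℝ,
      0 ≤ F t ∧ F t ≤ (ε * pp / θ) * G |t| + C * M |t| := by
  obtain ⟨C₀, hC₀, T, hT, hfar⟩ := hfinfty
  intro ε hε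
  have hpp0 : (0:ℝ) < pp := by linarith
  have hθ0 : (0:ℝ) < θ := by linarith
  have hε' : 0 < ε * pp / θ := by positivity
  -- F is nonnegative
  have hF00 : F 0 = 0 := by rw [hF 0, intervalIntegral.integral_same]
  have hFnn : ∀ t, 0 ≤ F t := by
    intro t
    rcases eq_or_ne t 0 with h | h
    · rw [h, hF00]
    · by_contra h'
      push_neg at h'
      nlinarith [(hAR t h).1]
  -- basic facts about g and G
  have hgnn : ∀ t : ℝ, 0 ≤ t → 0 ≤ g t := by
    intro t ht
    rcases ht.eq_or_lt with h | h
    · rw [← h, hg0]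
    · exact (hgpos t h).le
  have hgint : ∀ a b : ℝ, 0 ≤ a → 0 ≤ b → IntervalIntegrable g MeasureTheory.volume a b := by
    intro a b ha hb
    exact (hgmono.mono (fun x hx => le_trans (le_inf ha hb) hx.1)).intervalIntegrable
  have hGnn : ∀ t : ℝ, 0 ≤ t → 0 ≤ G t := by
    intro t ht
    rw [hG t]
    exact intervalIntegral.integral_nonneg ht (fun u hu => hgnn u hu.1)
  -- basic facts about m and M
  have hMpos : ∀ t : ℝ, 0 < t → 0 < M t := by
    intro t ht
    by_contra h'
    push_neg at h'
    rcases h'.eq_or_lt with h | h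
    · have h1 := (hmstruct t ht).1
      rw [h, div_zero] at h1
      linarith
    · have h1 : t * m t / M t < 0 := div_neg_of_pos_of_neg (mul_pos ht (hmpos t ht)) h
      linarith [(hmstruct t ht).1]
  have hmint0 : ∀ t : ℝ, 0 < t → IntervalIntegrable m MeasureTheory.volume 0 t := by
    intro t ht
    by_contra h'
    have h2 : M t = 0 := by rw [hM t]; exact intervalIntegral.integral_undef h'
    linarith [hMpos t ht]
  have hmint : ∀ a b : ℝ, 0 < a → a ≤ b → IntervalIntegrable m MeasureTheory.volume a b := by
    intro a b ha hab
    refine (hmcont.mono ?_).intervalIntegrable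
    rw [Set.uIcc_of_le hab]
    exact fun x hx => lt_of_lt_of_le ha hx.1
  have hMdiff : ∀ a b : ℝ, 0 < a → a ≤ b → M b = M a + ∫ τ in a..b, m τ := by
    intro a b ha hab
    rw [hM a, hM b, intervalIntegral.integral_add_adjacent_intervals (hmint0 a ha) (hmint a b ha hab)]
  have hMmono : ∀ a b : ℝ, 0 < a → a ≤ b → M a ≤ M b := by
    intro a b ha hab
    rw [hMdiff a b ha hab]
    have : 0 ≤ ∫ τ in a..b, m τ :=
      intervalIntegral.integral_nonneg hab (fun u hu => (hmpos u (lt_of_lt_of_le ha hu.1)).le)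
    linarith
  have hMnn : ∀ t : ℝ, 0 ≤ t → 0 ≤ M t := by
    intro t ht
    rcases ht.eq_or_lt with h | h
    · rw [← h, hM 0, intervalIntegral.integral_same]
    · exact (hMpos t h).le
  -- f vanishes at 0
  have hgabs : Tendsto (fun t : ℝ => g |t|) (nhds 0) (nhds 0) := by
    have h1 : Tendsto (fun t : ℝ => |t|) (nhds (0:ℝ)) (nhdsWithin 0 (Set.Ici 0)) := by
      rw [tendsto_nhdsWithin_iff]
      exact ⟨by have := continuous_abs.tendsto (0:ℝ); rwa [abs_zero] at this,
        Filter.Eventually.of_forall (fun x => abs_nonneg x)⟩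
    have h2 : Tendsto g (nhdsWithin 0 (Set.Ici 0)) (nhds 0) := by
      have := (hgrc 0 le_rfl).tendsto
      rwa [hg0] at this
    exact h2.comp h1
  have hf00 : f 0 = 0 := by
    have h1 : Tendsto f (nhdsWithin (0:ℝ) {(0:ℝ)}ᶜ) (nhds 0) := by
      have h2 : Tendsto (fun t => (f t / g |t|) * g |t|) (nhdsWithin (0:ℝ) {(0:ℝ)}ᶜ) (nhds 0) := by
        simpa using hf0.mul (hgabs.mono_left nhdsWithin_le_nhds)
      refine h2.congr' ?_
      filter_upwards [self_mem_nhdsWithin] with t ht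
      have hne : g |t| ≠ 0 :=
        ne_of_gt (hgpos _ (abs_pos.mpr (Set.mem_compl_singleton_iff.mp ht)))
      field_simp
    have h3 : Tendsto f (nhdsWithin (0:ℝ) {(0:ℝ)}ᶜ) (nhds (f 0)) :=
      (hf.tendsto 0).mono_left nhdsWithin_le_nhds
    exact tendsto_nhds_unique h3 h1
  -- smallness near 0
  obtain ⟨δ₀, hδ₀, hsm⟩ := Metric.tendsto_nhdsWithin_nhds.mp hf0 (ε * pp / θ) hε'
  set δ := δ₀ / 2 with hδdef
  have hδ : 0 < δ := by positivity
  have hsmall : ∀ t : ℝ, t ≠ 0 → |t| ≤ δ → |f t| ≤ (ε * pp / θ) * g |t| := by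
    intro t ht hts
    have hgp : 0 < g |t| := hgpos _ (abs_pos.mpr ht)
    have h1 := hsm (Set.mem_compl_singleton_iff.mpr ht)
      (by rw [Real.dist_eq, sub_zero]; linarith)
    rw [Real.dist_eq, sub_zero, abs_div, abs_of_pos hgp] at h1
    have := (div_lt_iff₀ hgp).mp h1
    linarith
  -- F expressed via reflected integrand for negative arguments
  have hFneg : ∀ t : ℝ, F t = ∫ s in (0:ℝ)..(-t), -f (-s) := by
    intro t
    have h1 : (∫ s in (0:ℝ)..(-t), f (-s)) = ∫ x in (-(-t))..(-(0:ℝ)), f x :=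
      intervalIntegral.integral_comp_neg f
    simp only [neg_neg, neg_zero] at h1
    have h2 : (∫ x in t..(0:ℝ), f x) = -∫ x in (0:ℝ)..t, f x :=
      intervalIntegral.integral_symm 0 t
    have h3 : (∫ s in (0:ℝ)..(-t), -f (-s)) = -∫ s in (0:ℝ)..(-t), f (-s) :=
      intervalIntegral.integral_neg
    rw [hF t, h3, h1, h2, neg_neg]
  -- bound near zero
  have hFsmall : ∀ t : ℝ, |t| ≤ δ → F t ≤ (ε * pp / θ) * G |t| := by
    intro t ht
    rcases le_or_gt 0 t with h0 | h0
    · rw [hF t, abs_of_nonneg h0, hG t, ← intervalIntegral.integral_const_mul]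
      apply intervalIntegral.integral_mono_on h0 (hf.intervalIntegrable 0 t)
        ((hgint 0 t le_rfl h0).const_mul _)
      intro x hx
      rcases eq_or_ne x 0 with h | h
      · rw [h, hf00, hg0, mul_zero]
      · have habs : |x| = x := abs_of_nonneg hx.1
        have hxd : |x| ≤ δ := by
          rw [habs]; exact le_trans hx.2 (by rwa [abs_of_nonneg h0] at ht)
        calc f x ≤ |f x| := le_abs_self _
          _ ≤ (ε * pp / θ) * g |x| := hsmall x h hxd
          _ = (ε * pp / θ) * g x := by rw [habs]
    · rw [hFneg t, abs_of_neg h0, hG (-t), ← intervalIntegral.integral_const_mul]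
      have h0' : (0:ℝ) ≤ -t := by linarith
      apply intervalIntegral.integral_mono_on h0'
        (((hf.comp continuous_neg).neg).intervalIntegrable 0 (-t))
        ((hgint 0 (-t) le_rfl h0').const_mul _)
      intro x hx
      rcases eq_or_ne x 0 with h | h
      · simp [h, Function.comp, hf00, hg0]
      · have hxpos : 0 < x := lt_of_le_of_ne hx.1 (Ne.symm h)
        have habs : |(-x)| = x := by rw [abs_neg, abs_of_pos hxpos]
        have hxd : |(-x)| ≤ δ := by
          rw [habs]; exact le_trans hx.2 (by rwa [abs_of_neg h0] at ht)
        show -f (-x) ≤ (ε * pp / θ) * g x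
        calc -f (-x) ≤ |f (-x)| := neg_le_abs _
          _ ≤ (ε * pp / θ) * g |(-x)| := hsmall (-x) (neg_ne_zero.mpr h) hxd
          _ = (ε * pp / θ) * g x := by rw [habs]
  -- the threshold and bound on the compact middle part
  set T₂ := max T δ with hT₂def
  have hT₂pos : 0 < T₂ := lt_of_lt_of_le hT (le_max_left _ _)
  have hδT₂ : δ ≤ T₂ := le_max_right _ _
  have hFc : Continuous F := by
    have hFe : F = fun b => ∫ x in (0:ℝ)..b, f x := funext hF
    rw [hFe]
    exact intervalIntegral.continuous_primitive (fun a b => hf.intervalIntegrable a b) 0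
  obtain ⟨K₀, hK₀⟩ :=
    (isCompact_Icc : IsCompact (Set.Icc (-T₂) T₂)).exists_bound_of_continuousOn hFc.continuousOn
  set K := max K₀ 0 with hKdef
  have hKnn : 0 ≤ K := le_max_right _ _
  have hK : ∀ x : ℝ, |x| ≤ T₂ → F x ≤ K := by
    intro x hx
    have h1 := hK₀ x (by rw [Set.mem_Icc]; exact abs_le.mp hx)
    rw [Real.norm_eq_abs] at h1
    exact le_trans (le_trans (le_abs_self _) h1) (le_max_left _ _)
  -- bound for large |t|
  have hFlarge : ∀ t : ℝ, T₂ ≤ |t| → F t ≤ K + C₀ * M |t| := by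
    intro t ht
    rcases le_or_gt 0 t with h0 | h0
    · rw [abs_of_nonneg h0] at ht ⊢
      have hadd : F T₂ + (∫ τ in T₂..t, f τ) = F t := by
        rw [hF T₂, hF t]
        exact intervalIntegral.integral_add_adjacent_intervals
          (hf.intervalIntegrable 0 T₂) (hf.intervalIntegrable T₂ t)
      have hbound : (∫ τ in T₂..t, f τ) ≤ ∫ τ in T₂..t, C₀ * m τ := by
        apply intervalIntegral.integral_mono_on ht (hf.intervalIntegrable _ _)
          ((hmint T₂ t hT₂pos ht).const_mul _)
        intro x hx
        have hxpos : 0 < x := lt_of_lt_of_le hT₂pos hx.1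
        have h2 := hfar x (by rw [abs_of_pos hxpos]; exact le_trans (le_max_left T δ) hx.1)
        rw [abs_of_pos hxpos] at h2
        exact le_trans (le_abs_self _) h2
      rw [intervalIntegral.integral_const_mul] at hbound
      have hMint : (∫ τ in T₂..t, m τ) = M t - M T₂ := by
        rw [hMdiff T₂ t hT₂pos ht]; ring
      rw [hMint] at hbound
      have h1 := hK T₂ (by rw [abs_of_pos hT₂pos])
      nlinarith [hMpos T₂ hT₂pos]
    · rw [abs_of_neg h0] at ht ⊢
      have ht' : T₂ ≤ -t := ht
      have hadd : F (-T₂) + (∫ τ in (-T₂)..t, f τ) = F t := by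
        rw [hF (-T₂), hF t]
        exact intervalIntegral.integral_add_adjacent_intervals
          (hf.intervalIntegrable 0 (-T₂)) (hf.intervalIntegrable (-T₂) t)
      have hflip : (∫ τ in (-T₂)..t, f τ) = ∫ s in T₂..(-t), -f (-s) := by
        have h1 : (∫ s in T₂..(-t), f (-s)) = ∫ x in (-(-t))..(-T₂), f x :=
          intervalIntegral.integral_comp_neg f
        simp only [neg_neg] at h1
        have h2 : (∫ x in t..(-T₂), f x) = -∫ x in (-T₂)..t, f x :=
          intervalIntegral.integral_symm (-T₂) t
        have h3 : (∫ s in T₂..(-t), -f (-s)) = -∫ s in T₂..(-t), f (-s) :=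
          intervalIntegral.integral_neg
        rw [h3, h1, h2, neg_neg]
      have hbound : (∫ s in T₂..(-t), -f (-s)) ≤ ∫ s in T₂..(-t), C₀ * m s := by
        apply intervalIntegral.integral_mono_on ht'
          (((hf.comp continuous_neg).neg).intervalIntegrable _ _)
          ((hmint T₂ (-t) hT₂pos ht').const_mul _)
        intro x hx
        have hxpos : 0 < x := lt_of_lt_of_le hT₂pos hx.1
        have habs : |(-x)| = x := by rw [abs_neg, abs_of_pos hxpos]
        have h2 := hfar (-x) (by rw [habs]; exact le_trans (le_max_left T δ) hx.1)
        rw [habs] at h2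
        show -f (-x) ≤ C₀ * m x
        exact le_trans (neg_le_abs _) h2
      rw [intervalIntegral.integral_const_mul] at hbound
      have hMint : (∫ τ in T₂..(-t), m τ) = M (-t) - M T₂ := by
        rw [hMdiff T₂ (-t) hT₂pos ht']; ring
      rw [hMint] at hbound
      have h1 := hK (-T₂) (by rw [abs_neg, abs_of_pos hT₂pos])
      nlinarith [hMpos T₂ hT₂pos]
  -- assemble
  have hMδ : 0 < M δ := hMpos δ hδ
  refine ⟨C₀ + (K + 1) / M δ, by positivity, ?_⟩
  intro t
  refine ⟨hFnn t, ?_⟩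
  have hMabs : 0 ≤ M |t| := hMnn _ (abs_nonneg t)
  have hGabs : 0 ≤ G |t| := hGnn _ (abs_nonneg t)
  have hexpand : (C₀ + (K + 1) / M δ) * M |t| = C₀ * M |t| + (K + 1) / M δ * M |t| := by ring
  have hC₀M : 0 ≤ C₀ * M |t| := mul_nonneg hC₀.le hMabs
  have hεG : 0 ≤ ε * pp / θ * G |t| := mul_nonneg hε'.le hGabs
  rcases le_or_gt |t| δ with h1 | h1
  · have h2 := hFsmall t h1
    have h3 : 0 ≤ (C₀ + (K + 1) / M δ) * M |t| := mul_nonneg (by positivity) hMabs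
    linarith
  · have hMge : M δ ≤ M |t| := hMmono δ _ hδ h1.le
    have hKle : K ≤ (K + 1) / M δ * M |t| := by
      rw [div_mul_eq_mul_div, le_div_iff₀ hMδ]
      nlinarith
    rcases le_or_gt |t| T₂ with h2 | h2
    · have h3 := hK t h2
      linarith
    · have h3 := hFlarge t h2.le
      linarith
end
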